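/- arXiv:1309.6017 — 2 statements merged into one kernel-verified Lean document; each statement's English description precedes it below -/
import Mathlib

section
/- Let D be a positive definite symmetric real n×n matrix with eigenvalues d_1,...,d_n and trace T = tr(D). If every eigenvalue satisfies d_i < T/(2+√2), then for every symmetric n×n matrix h one has ⟨D,h⟩² − tr((D∘h)²) + T·⟨D∘h, h⟩ ≤ (1/2)·T²·|h|², where ⟨A,B⟩ = tr(AB) and |h|² = tr(h²). -/
/-!
Write `T = tr D`. Cauchy–Schwarz for the semi-inner product `(X, Y) ↦ tr (Xᵀ D Y)`, applied to
`X = 1`, `Y = h`, gives `⟨D, h⟩² ≤ T · tr (h D h)`, so the left-hand side is at most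
`2T · tr (D h²) - tr ((D h)²) = T² |h|² - tr (A h A h)` with `A = T - D`.
Since `1 / (2 + √2) = 1 - 1 / √2`, the eigenvalue bound says `A ≥ T / √2`, and
`tr (A h A h) ≥ c² |h|²` whenever `A ≥ c ≥ 0`: writing `A = c + B`, the remaining terms
`tr (h B h)` and `tr (B h B h)` are traces of products of positive semidefinite matrices.
-/

namespace Matrix

variable {n 𝕜 : Type*} [Fintype n] [DecidableEq n] [RCLike 𝕜]

open scoped ComplexOrder MatrixOrder

lemma PosSemidef.trace_mul_nonneg {A B : Matrix n n 𝕜} (hA : A.PosSemidef)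
    (hB : B.PosSemidef) : 0 ≤ (A * B).trace := by
  set S := CFC.sqrt A
  have hS : S.IsHermitian := (nonneg_iff_posSemidef.mp (CFC.sqrt_nonneg A)).isHermitian
  have hSS : S * S = A := CFC.sqrt_mul_sqrt_self A hA.nonneg
  have := (hB.conjTranspose_mul_mul_same S).trace_nonneg
  rwa [hS.eq, trace_mul_cycle, hSS] at this

lemma IsHermitian.posSemidef_sub_of_eigenvalues_le {A : Matrix n n 𝕜}
    (hA : A.IsHermitian) {c : ℝ} (hc : ∀ i, hA.eigenvalues i ≤ c) :
    (c • 1 - A).PosSemidef := by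
  have : A ≤ algebraMap ℝ _ c := by
    rw [le_algebraMap_iff_spectrum_le hA.isSelfAdjoint, hA.spectrum_real_eq_range_eigenvalues]
    rintro _ ⟨i, rfl⟩
    exact hc i
  simpa [Algebra.algebraMap_eq_smul_one] using le_iff.mp this

lemma PosSemidef.trace_mul_sq_le_trace_mul_trace {D : Matrix n n ℝ} (hD : D.PosSemidef)
    (h : Matrix n n ℝ) : (D * h).trace ^ 2 ≤ D.trace * (hᵀ * D * h).trace := by
  have hquad (t : ℝ) :
      0 ≤ D.trace * (t * t) + 2 * (D * h).trace * t + (hᵀ * D * h).trace := by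
    have hDt : Dᵀ = D := by simpa [conjTranspose_eq_transpose_of_trivial] using hD.1.eq
    have hcross : (hᵀ * D).trace = (D * h).trace := by
      rw [← trace_transpose, transpose_mul, transpose_transpose, hDt]
    have := (hD.conjTranspose_mul_mul_same (t • 1 + h)).trace_nonneg
    simp only [conjTranspose_eq_transpose_of_trivial, transpose_add, transpose_smul,
      transpose_one, add_mul, mul_add, smul_mul_assoc, mul_smul_comm, Matrix.one_mul,
      Matrix.mul_one, trace_add, trace_smul, hcross, smul_eq_mul] at this
    linarith
  have := discrim_le_zero hquad
  rw [discrim] at this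
  linarith

lemma IsHermitian.sq_mul_trace_mul_self_le {A h : Matrix n n ℝ} {c : ℝ} (hh : h.IsHermitian)
    (hA : (A - c • 1).PosSemidef) (hc : 0 ≤ c) :
    c ^ 2 * (h * h).trace ≤ (A * h * A * h).trace := by
  set B := A - c • 1
  have hAB : A = c • 1 + B := by simp [B]
  have hconj : 0 ≤ (h * B * h).trace := by
    simpa only [hh.eq] using (hA.conjTranspose_mul_mul_same h).trace_nonneg
  have hcross : (B * h * h).trace = (h * B * h).trace := trace_mul_cycle _ _ _
  have hprod : 0 ≤ (B * h * B * h).trace := by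
    have := hA.trace_mul_nonneg (hA.conjTranspose_mul_mul_same h)
    rwa [hh.eq, ← Matrix.mul_assoc, ← Matrix.mul_assoc] at this
  have hexp : (A * h * A * h).trace
      = c ^ 2 * (h * h).trace + c * (h * B * h).trace + c * (B * h * h).trace
        + (B * h * B * h).trace := by
    simp only [hAB, add_mul, mul_add, smul_mul_assoc, mul_smul_comm, Matrix.one_mul,
      Matrix.mul_one, trace_add, trace_smul, smul_eq_mul]
    ring
  nlinarith [mul_nonneg hc hconj]

end Matrix

lemma div_two_add_sqrt_two (x : ℝ) : x / (2 + √2) = x - x / √2 := by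
  field_simp
  linear_combination (-x) * Real.sq_sqrt (show (0 : ℝ) ≤ 2 by norm_num)

theorem stmt0_general (n : ℕ) (D : Matrix (Fin n) (Fin n) ℝ)
    (hpd : D.PosDef)
    (heig : ∀ i, hpd.1.eigenvalues i < D.trace / (2 + Real.sqrt 2)) :
    ∀ h : Matrix (Fin n) (Fin n) ℝ, h.IsSymm →
      (D * h).trace ^ 2 - ((D * h) * (D * h)).trace
        + D.trace * ((D * h) * h).trace
      ≤ (1 / 2) * D.trace ^ 2 * (h * h).trace := by
  intro h hh
  set T := D.trace
  have hT : 0 ≤ T := hpd.posSemidef.trace_nonneg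
  have hcs := hpd.posSemidef.trace_mul_sq_le_trace_mul_trace h
  rw [hh.eq, ← Matrix.trace_mul_cycle D h h] at hcs
  have hgap : ((T • 1 - D) - (T / √2) • 1).PosSemidef := by
    have := hpd.1.posSemidef_sub_of_eigenvalues_le (c := T - T / √2)
      fun i ↦ (heig i).le.trans_eq (div_two_add_sqrt_two T)
    rwa [sub_right_comm, ← sub_smul]
  have hlow := (Matrix.isHermitian_iff_isSymm.mpr hh).sq_mul_trace_mul_self_le hgap (by positivity)
  have hc : (T / √2) ^ 2 = T ^ 2 / 2 := by rw [div_pow, Real.sq_sqrt zero_le_two]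
  have hexp : ((T • 1 - D) * h * (T • 1 - D) * h).trace
      = T ^ 2 * (h * h).trace - 2 * T * (D * h * h).trace + (D * h * (D * h)).trace := by
    have hcyc : (h * (D * h)).trace = (D * (h * h)).trace := by
      simpa only [Matrix.mul_assoc] using (Matrix.trace_mul_cycle D h h).symm
    simp only [sub_mul, mul_sub, smul_mul_assoc, mul_smul_comm, Matrix.one_mul, Matrix.mul_one,
      Matrix.trace_sub, Matrix.trace_smul, smul_eq_mul, Matrix.mul_assoc, hcyc]
    ring
  rw [hc, hexp] at hlow
  linarith

/-- If every eigenvalue of a positive definite symmetric real matrix `D` is less than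
`tr D / (2 + √2)`, then for every symmetric matrix `h`,
`⟨D,h⟩² − tr((D∘h)²) + tr D · ⟨D∘h, h⟩ ≤ (1/2) (tr D)² |h|²`. -/
theorem stmt0 (n : ℕ) (D : Matrix (Fin n) (Fin n) ℝ)
    (hDsymm : D.IsSymm) (hpd : D.PosDef)
    (heig : ∀ i, hpd.1.eigenvalues i < D.trace / (2 + Real.sqrt 2)) :
    ∀ h : Matrix (Fin n) (Fin n) ℝ, h.IsSymm →
      (D * h).trace ^ 2 - ((D * h) * (D * h)).trace
        + D.trace * ((D * h) * h).trace
      ≤ (1 / 2) * D.trace ^ 2 * (h * h).trace :=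
  stmt0_general n D hpd heig
end

section
/- For every integer q ≥ 4, each of the following quantities is strictly less than q − 1/2: (i) −249/256 + 1/(2q) + 249q/256; (ii) −1/4 + 1/q + 21/(8√2·√q) + q/2; (iii) (3√2/7)(√q − 1/√q); (iv) 57/25 + 25/(8q); (v) 2/q; (vi) −1 + 1/(2q) + q. -/
/-!
Every reciprocal term is decreasing in `q`, so it is bounded by its value at the smallest
admissible `q`, while the remaining terms grow with slope less than `1`; this leaves a positive
margin below `q - 1/2`. For `C_{i0}` the factor `3√2/7` is less than `1` and
`√q - 1/√q = (q - 1)/√q ≤ q - 1` once `q ≥ 1`.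
-/

namespace FreeTwoStepNilpotent

variable {x : ℝ}

lemma Ci_lt (hx : 1 < x) : -249 / 256 + 1 / (2 * x) + 249 * x / 256 < x - 1 / 2 := by
  have h : 1 / (2 * x) < 1 / 2 := one_div_lt_one_div_of_lt (by norm_num) (by linarith)
  linarith

lemma Ciβ_lt (hx : 4 ≤ x) :
    -1 / 4 + 1 / x + 21 / (8 * √2 * √x) + x / 2 < x - 1 / 2 := by
  have hrecip : 1 / x ≤ 1 / 4 := one_div_le_one_div_of_le (by norm_num) hx
  have hsqrt2 : 1 ≤ √2 := Real.one_le_sqrt.mpr (by norm_num)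
  have hsqrtx : 2 ≤ √x := Real.le_sqrt_of_sq_le (by linarith)
  have hmixed : 21 / (8 * √2 * √x) ≤ 21 / 16 :=
    div_le_div_of_nonneg_left (by norm_num) (by norm_num) (by nlinarith)
  linarith

lemma sqrt_sub_inv_sqrt_le (hx : 1 ≤ x) : √x - 1 / √x ≤ x - 1 := by
  have hs : 1 ≤ √x := Real.one_le_sqrt.mpr hx
  have hsq : √x ^ 2 = x := Real.sq_sqrt (by linarith)
  have hform : √x - 1 / √x = (x - 1) / √x := by
    field_simp
    rw [hsq]
  rw [hform]
  exact div_le_self (by linarith) hs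

lemma Ci0_lt (hx : 1 ≤ x) : (3 * √2 / 7) * (√x - 1 / √x) < x - 1 / 2 := by
  have hsqrt2 : √2 < 7 / 3 := (Real.sqrt_lt' (by norm_num)).mpr (by norm_num)
  have hdiff : √x - 1 / √x ≤ x - 1 := sqrt_sub_inv_sqrt_le hx
  have hdiff0 : 0 ≤ √x - 1 / √x := by
    have hs : 1 ≤ √x := Real.one_le_sqrt.mpr hx
    have : 1 / √x ≤ 1 := (div_le_one (by linarith)).mpr hs
    linarith
  nlinarith [Real.sqrt_nonneg 2]

lemma Cα_lt (hx : 4 ≤ x) : 57 / 25 + 25 / (8 * x) < x - 1 / 2 := by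
  have h : 25 / (8 * x) ≤ 25 / 32 :=
    div_le_div_of_nonneg_left (by norm_num) (by norm_num) (by linarith)
  linarith

lemma Cα0_lt (hx : 2 ≤ x) : 2 / x < x - 1 / 2 := by
  have h : 2 / x ≤ 1 := (div_le_one (by linarith)).mpr hx
  linarith

lemma C00_lt (hx : 1 < x) : -1 + 1 / (2 * x) + x < x - 1 / 2 := by
  have h : 1 / (2 * x) < 1 / 2 := one_div_lt_one_div_of_lt (by norm_num) (by linarith)
  linarith

end FreeTwoStepNilpotent

open FreeTwoStepNilpotent in
/-- For every integer `q ≥ 4`, each of the six coefficient bounds is strictly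
less than `q − 1/2`. -/
theorem stmt18 (q : ℕ) (hq : 4 ≤ q) :
    (-249 / 256 + 1 / (2 * (q : ℝ)) + 249 * q / 256 < (q : ℝ) - 1 / 2) ∧
    (-1 / 4 + 1 / (q : ℝ) + 21 / (8 * Real.sqrt 2 * Real.sqrt q) + (q : ℝ) / 2
        < (q : ℝ) - 1 / 2) ∧
    ((3 * Real.sqrt 2 / 7) * (Real.sqrt q - 1 / Real.sqrt q) < (q : ℝ) - 1 / 2) ∧
    (57 / 25 + 25 / (8 * (q : ℝ)) < (q : ℝ) - 1 / 2) ∧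
    (2 / (q : ℝ) < (q : ℝ) - 1 / 2) ∧
    (-1 + 1 / (2 * (q : ℝ)) + (q : ℝ) < (q : ℝ) - 1 / 2) := by
  have hx : (4 : ℝ) ≤ q := by exact_mod_cast hq
  exact ⟨Ci_lt (by linarith), Ciβ_lt hx, Ci0_lt (by linarith), Cα_lt hx, Cα0_lt (by linarith),
    C00_lt (by linarith)⟩
end
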